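/- Let B be an infinite set. Then there exist a torsion-free simple group H and an injective group homomorphism from the free group F(B) on the basis B into H. -/

import Mathlib

/-!
Neumann's construction. If `G` is torsion-free and `a, b ≠ 1`, the HNN extension of `G` that
identifies the infinite cyclic groups `⟨a⟩` and `⟨b⟩` makes `a` and `b` conjugate, has cardinality
at most `max #G ℵ₀`, and is again torsion-free: by Britton's lemma the powers of a cyclically
reduced word of positive length are never trivial, and every other element is conjugate to a
shorter word or into `G`. Transfinitely many such steps make all non-trivial elements of a group
`K` conjugate in some `K' ⊇ K` of the same cardinality, and the union of the chain
`F(B) ⊆ K₁ ⊆ K₂ ⊆ ⋯` obtained by iterating this is torsion-free with all non-trivial elements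
conjugate, hence simple. So that these unions stay in one universe, every group of the
construction is realised as a group structure on a subset of the fixed type `Set (F(B))`, which is
larger than all of them.
-/

/-- The pre-2025 Mathlib definition: a monoid is torsion-free if every non-identity
element has infinite order. -/
def Monoid.IsTorsionFree (G : Type*) [Monoid G] : Prop :=
  ∀ g : G, g ≠ 1 → ¬IsOfFinOrder g

universe u

open Cardinal

namespace HNNExtension
open NormalWord

variable {G : Type*} [Group G] {A B : Subgroup G}

variable (A B) in
/-- Consecutive letters `(u, g) (v, _)` of a word, standing for `t ^ u * g * t ^ v * ⋯`, do not form
a pinch `t ^ u * g * t ^ (-u)` with `g ∈ toSubgroup A B u`: the relation of `ReducedWord.chain`. -/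
def NoPinch (a b : ℤˣ × G) : Prop := a.2 ∈ toSubgroup A B a.1 → a.1 = b.1

variable (A B) in
def IsCyclicallyReduced (l : List (ℤˣ × G)) : Prop :=
  l.IsChain (NoPinch A B) ∧ ∀ a ∈ l.getLast?, ∀ b ∈ l.head?, NoPinch A B a b

variable (φ : A ≃* B)

def wordProd (l : List (ℤˣ × G)) : HNNExtension G A B φ :=
  (l.map fun x => t ^ (x.1 : ℤ) * of x.2).prod

theorem eq_nil_of_wordProd_mem_range {l : List (ℤˣ × G)} (hl : l.IsChain (NoPinch A B))
    (h : wordProd φ l ∈ (of : G →* HNNExtension G A B φ).range) : l = [] :=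
  ReducedWord.toList_eq_nil_of_mem_of_range φ ⟨1, l, hl⟩ <| by
    simpa [ReducedWord.prod, wordProd] using h

theorem IsCyclicallyReduced.not_isOfFinOrder {l : List (ℤˣ × G)}
    (hl : IsCyclicallyReduced A B l) (hne : l ≠ []) : ¬IsOfFinOrder (wordProd φ l) := by
  rw [isOfFinOrder_iff_pow_eq_one]
  rintro ⟨n, hn, hpow⟩
  have hchain : ((List.replicate n l).flatten).IsChain (NoPinch A B) :=
    (List.isChain_flatten (by simp [hne.symm])).2
      ⟨by simpa using fun _ => hl.1, List.isChain_replicate_of_rel n hl.2⟩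
  have hprod : wordProd φ (List.replicate n l).flatten = 1 := by
    simpa [wordProd, List.map_flatten, List.prod_flatten] using hpow
  simpa [hne, hn.ne'] using eq_nil_of_wordProd_mem_range φ hchain (hprod ▸ one_mem _)

theorem t_zpow_mul_of_mul_t_zpow_neg (u : ℤˣ) (g : toSubgroup A B u) :
    t ^ (u : ℤ) * of (g : G) * t ^ (-(u : ℤ)) =
      (of (toSubgroupEquiv φ u g : G) : HNNExtension G A B φ) := by
  rcases Int.units_eq_one_or u with rfl | rfl
  · simp only [Units.val_one, zpow_one, zpow_neg]
    exact (equiv_eq_conj g).symm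
  · simp only [Units.val_neg, Units.val_one, zpow_neg, zpow_one, inv_inv]
    exact (equiv_symm_eq_conj g).symm

theorem isConj_wordProd_of_pinch {a q : ℤˣ × G} (m : List (ℤˣ × G))
    (hq : q.2 ∈ toSubgroup A B q.1) (ha : a.1 = -q.1) :
    IsConj (wordProd φ (a :: m ++ [q]))
      (wordProd φ m * of (toSubgroupEquiv φ q.1 ⟨q.2, hq⟩ * a.2)) := by
  obtain ⟨_, a⟩ := a
  subst ha
  refine isConj_iff.2 ⟨(t ^ (-q.1 : ℤ) * of a)⁻¹, ?_⟩
  rw [map_mul, ← t_zpow_mul_of_mul_t_zpow_neg]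
  simp only [wordProd, List.map_cons, List.map_append, List.prod_cons, List.prod_append,
    List.map_nil, List.prod_nil, mul_one, Units.val_neg]
  group

theorem isChain_noPinch_concat_iff {l : List (ℤˣ × G)} {u : ℤˣ} {g g' : G} :
    (l ++ [(u, g)]).IsChain (NoPinch A B) ↔ (l ++ [(u, g')]).IsChain (NoPinch A B) := by
  simp [List.isChain_append, NoPinch]

theorem wordProd_concat_mul (l : List (ℤˣ × G)) (u : ℤˣ) (g h : G) :
    wordProd φ (l ++ [(u, g)]) * of h = wordProd φ (l ++ [(u, g * h)]) := by
  simp [wordProd, mul_assoc]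

theorem exists_isConj_of_or_isCyclicallyReduced (l : List (ℤˣ × G))
    (hl : l.IsChain (NoPinch A B)) (h : G) :
    (∃ g, IsConj (wordProd φ l * of h) (of g)) ∨
      ∃ l', IsCyclicallyReduced A B l' ∧ l' ≠ [] ∧
        IsConj (wordProd φ l * of h) (wordProd φ l') := by
  induction hn : l.length using Nat.strong_induction_on generalizing l h with
  | _ n ih =>
  rcases l.eq_nil_or_concat with rfl | ⟨l₀, ⟨u, g⟩, rfl⟩
  · exact .inl ⟨h, by rw [wordProd, List.map_nil, List.prod_nil, one_mul]⟩
  rw [List.concat_eq_append] at hl hn ⊢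
  have hl' : (l₀ ++ [(u, g * h)]).IsChain (NoPinch A B) := isChain_noPinch_concat_iff.1 hl
  rw [wordProd_concat_mul]
  rcases l₀ with _ | ⟨a, m⟩
  · exact .inr ⟨_, ⟨List.isChain_singleton _, by simp [NoPinch]⟩, by simp, .refl _⟩
  -- Unless the word is cyclically reduced, its last and first letters form a pinch, which
  -- conjugation by the first letter cancels.
  by_cases hp : NoPinch A B (u, g * h) a
  · exact .inr ⟨_, ⟨hl', by rw [List.getLast?_concat]; simpa using hp⟩, by simp, .refl _⟩
  obtain ⟨hmem, hne⟩ := Classical.not_imp.1 hp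
  have ha : a.1 = -u := Int.units_ne_iff_eq_neg.1 (Ne.symm hne)
  have hm : m.IsChain (NoPinch A B) := hl.infix ⟨[a], [(u, g)], rfl⟩
  have hlen : m.length < n := by simp at hn; omega
  have hc := isConj_wordProd_of_pinch φ m hmem ha
  rcases ih _ hlen m hm _ rfl with ⟨g', hg'⟩ | ⟨l', hl', hne', hc'⟩
  · exact .inl ⟨g', hc.trans hg'⟩
  · exact .inr ⟨l', hl', hne', hc.trans hc'⟩

theorem isTorsionFree (hG : Monoid.IsTorsionFree G) :
    Monoid.IsTorsionFree (HNNExtension G A B φ) := by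
  intro x hx hfin
  obtain ⟨d⟩ := TransversalPair.nonempty G A B
  set w := (NormalWord.equiv φ d x).toReducedWord
  have hw : of w.head * wordProd φ w.toList = x := (NormalWord.equiv φ d).symm_apply_apply x
  have hconj : IsConj x (wordProd φ w.toList * of w.head) :=
    isConj_iff.2 ⟨(of w.head)⁻¹, by rw [← hw]; group⟩
  rcases exists_isConj_of_or_isCyclicallyReduced φ w.toList w.chain w.head with
    ⟨g, hg⟩ | ⟨l, hl, hne, hl'⟩
  · have hg1 : g = 1 := by
      by_contra hg1
      exact hG g hg1 ((of_injective φ).isOfFinOrder_iff.1 ((hconj.trans hg).isOfFinOrder hfin))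
    exact hx (isConj_one_left.1 (by simpa [hg1] using hconj.trans hg))
  · exact hl.not_isOfFinOrder φ hne ((hconj.trans hl').isOfFinOrder hfin)

theorem mk_le_max : #(HNNExtension G A B φ) ≤ max #G ℵ₀ := by
  have hsurj : Function.Surjective ((HNNExtension.con G A B φ).mk'.comp
      (Monoid.Coprod.mk : FreeMonoid (G ⊕ Multiplicative ℤ) →* _)) :=
    Con.mk'_surjective.comp Monoid.Coprod.mk_surjective
  calc #(HNNExtension G A B φ) ≤ #(FreeMonoid (G ⊕ Multiplicative ℤ)) := mk_le_of_surjective hsurj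
    _ ≤ max ℵ₀ #(G ⊕ Multiplicative ℤ) := mk_list_le_max _
    _ ≤ max #G ℵ₀ := by
      rw [max_comm, mk_sum]
      simpa using add_le_max #G ℵ₀

end HNNExtension

open HNNExtension in
theorem Monoid.IsTorsionFree.exists_isConj {G : Type u} [Group G] (hG : Monoid.IsTorsionFree G)
    {a b : G} (ha : a ≠ 1) (hb : b ≠ 1) :
    ∃ (H : Type u) (_ : Group H) (f : G →* H), Function.Injective f ∧
      Monoid.IsTorsionFree H ∧ IsConj (f a) (f b) ∧ #H ≤ max #G ℵ₀ := by
  have hinj {g : G} (hg : g ≠ 1) : Function.Injective (zpowersHom G g) :=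
    injective_zpow_iff_not_isOfFinOrder.2 (hG g hg)
  set ea := MonoidHom.ofInjective (hinj ha)
  set eb := MonoidHom.ofInjective (hinj hb)
  set φ := ea.symm.trans eb
  refine ⟨HNNExtension G _ _ φ, inferInstance, of, of_injective φ, isTorsionFree φ hG, ?_,
    mk_le_max φ⟩
  have hφ : φ (ea (.ofAdd 1)) = eb (.ofAdd 1) := by simp [φ]
  have hconj := equiv_eq_conj (φ := φ) (ea (.ofAdd 1))
  rw [hφ] at hconj
  exact isConj_iff.2 ⟨t, by simpa [ea, eb, MonoidHom.ofInjective_apply] using hconj.symm⟩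

theorem Monoid.IsTorsionFree.of_injective {G H : Type*} [Group G] [Group H] {f : G →* H}
    (hf : Function.Injective f) (hH : Monoid.IsTorsionFree H) : Monoid.IsTorsionFree G :=
  fun a ha hfin => hH (f a) ((map_ne_one_iff f hf).2 ha) (hf.isOfFinOrder_iff.2 hfin)

theorem IsSimpleGroup.of_forall_isConj {G : Type*} [Group G] [Nontrivial G]
    (h : ∀ x y : G, x ≠ 1 → y ≠ 1 → IsConj x y) : IsSimpleGroup G := by
  refine ⟨fun N hN => N.bot_or_exists_ne_one.imp_right fun ⟨x, hxN, hx⟩ => ?_⟩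
  refine N.eq_top_iff'.2 fun y => ?_
  rcases eq_or_ne y 1 with rfl | hy
  · exact N.one_mem
  obtain ⟨c, rfl⟩ := isConj_iff.1 (h x y hx hy)
  exact hN.conj_mem x hxN c

theorem Function.Injective.exists_injective_comp_eq {α β γ : Type u} {f : α → β}
    (hf : Function.Injective f) {g : α → γ} (hg : Function.Injective g)
    (hcard : #β ≤ #↥(Set.range g)ᶜ) : ∃ θ : β → γ, Function.Injective θ ∧ θ ∘ f = g := by
  obtain ⟨e⟩ := hcard
  refine ⟨Function.extend f g (fun b => e b), fun b₁ b₂ h => ?_, Function.extend_comp hf g _⟩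
  by_cases h₁ : ∃ a, f a = b₁ <;> by_cases h₂ : ∃ a, f a = b₂
  · obtain ⟨a₁, rfl⟩ := h₁
    obtain ⟨a₂, rfl⟩ := h₂
    simp only [hf.extend_apply] at h
    rw [hg h]
  · obtain ⟨a₁, rfl⟩ := h₁
    rw [hf.extend_apply, Function.extend_apply' _ _ _ h₂] at h
    exact absurd ⟨a₁, h⟩ (e b₂).2
  · obtain ⟨a₂, rfl⟩ := h₂
    rw [hf.extend_apply, Function.extend_apply' _ _ _ h₁] at h
    exact absurd ⟨a₂, h.symm⟩ (e b₁).2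
  · rw [Function.extend_apply' _ _ _ h₁, Function.extend_apply' _ _ _ h₂] at h
    exact e.injective (Subtype.ext h)

/-- Transfinite construction: the requirements `P i` are met one at a time along the well-order
of `I`, each stage lying above all earlier ones; `hbound` supplies the unions. -/
theorem exists_le_forall_of_wellFoundedLT {α : Type*} [Preorder α] {I : Type u} [LinearOrder I]
    [WellFoundedLT I] (Adm : α → Prop) (P : I → α → Prop) (a : α)
    (hbound : ∀ {J : Type u} (g : J → α), Directed (· ≤ ·) g → #J ≤ #I → (∀ j, Adm (g j)) →
      (∀ j, a ≤ g j) → ∃ b, Adm b ∧ a ≤ b ∧ ∀ j, g j ≤ b)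
    (hstep : ∀ i b, a ≤ b → Adm b → ∃ c, b ≤ c ∧ Adm c ∧ P i c)
    (hP : ∀ i b c, b ≤ c → P i b → P i c) :
    ∃ b, a ≤ b ∧ Adm b ∧ ∀ i, P i b := by
  classical
  let Good (i : I) (prev : ∀ j < i, α) (b : α) : Prop :=
    a ≤ b ∧ Adm b ∧ P i b ∧ ∀ j (hj : j < i), prev j hj ≤ b
  let stage : I → α :=
    WellFoundedLT.fix fun i prev => if h : ∃ b, Good i prev b then h.choose else a
  have hgood (i : I) : Good i (fun j _ => stage j) (stage i) := by
    induction i using WellFoundedLT.induction with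
    | _ i ih =>
    have hmono : Monotone fun j : {j // j < i} => stage j :=
      monotone_iff_forall_lt.2 fun j j' hj => (ih j' j'.2).2.2.2 j hj
    obtain ⟨u, hu, hau, hju⟩ := hbound _ hmono.directed_le (mk_subtype_le _)
      (fun j => (ih j j.2).2.1) (fun j => (ih j j.2).1)
    obtain ⟨b, hub, hb, hPb⟩ := hstep i u hau hu
    have h : ∃ b, Good i (fun j _ => stage j) b :=
      ⟨b, hau.trans hub, hb, hPb, fun j hj => (hju ⟨j, hj⟩).trans hub⟩
    have hi : stage i = h.choose := by
      change WellFoundedLT.fix _ i = _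
      rw [WellFoundedLT.fix_eq, dif_pos h]
    rw [hi]
    exact h.choose_spec
  have hmono : Monotone stage := monotone_iff_forall_lt.2 fun i j hij => (hgood j).2.2.2 i hij
  obtain ⟨b, hb, hab, hib⟩ := hbound stage hmono.directed_le le_rfl (fun i => (hgood i).2.1)
    (fun i => (hgood i).1)
  exact ⟨b, hab, hb, fun i => hP i _ _ (hib i) (hgood i).2.2.1⟩

/-- A group structure on the subset `carrier` of `V`; the operations are arbitrary outside it. -/
structure SubsetGroup (V : Type u) where
  carrier : Set V
  one : V
  mul : V → V → V
  inv : V → V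
  one_mem : one ∈ carrier
  mul_mem {x y : V} : x ∈ carrier → y ∈ carrier → mul x y ∈ carrier
  inv_mem {x : V} : x ∈ carrier → inv x ∈ carrier
  mul_assoc {x y z : V} : x ∈ carrier → y ∈ carrier → z ∈ carrier →
    mul (mul x y) z = mul x (mul y z)
  one_mul {x : V} : x ∈ carrier → mul one x = x
  inv_mul_cancel {x : V} : x ∈ carrier → mul (inv x) x = one

namespace SubsetGroup

variable {V : Type u}

instance : CoeSort (SubsetGroup V) (Type u) := ⟨fun K => K.carrier⟩

noncomputable instance (K : SubsetGroup V) : Group K :=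
  letI : One K := ⟨⟨K.one, K.one_mem⟩⟩
  letI : Mul K := ⟨fun a b => ⟨K.mul a b, K.mul_mem a.2 b.2⟩⟩
  letI : Inv K := ⟨fun a => ⟨K.inv a, K.inv_mem a.2⟩⟩
  Group.ofLeftAxioms (fun a b c => Subtype.ext (K.mul_assoc a.2 b.2 c.2))
    (fun a => Subtype.ext (K.one_mul a.2)) (fun a => Subtype.ext (K.inv_mul_cancel a.2))

instance : Preorder (SubsetGroup V) where
  le K L := K.carrier ⊆ L.carrier ∧ ∀ x ∈ K.carrier, ∀ y ∈ K.carrier, K.mul x y = L.mul x y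
  le_refl _ := ⟨subset_rfl, fun _ _ _ _ => rfl⟩
  le_trans _ _ _ h h' :=
    ⟨h.1.trans h'.1, fun x hx y hy => (h.2 x hx y hy).trans (h'.2 x (h.1 hx) y (h.1 hy))⟩

variable {K L : SubsetGroup V}

noncomputable def incl (h : K ≤ L) : K →* L :=
  MonoidHom.mk' (Set.inclusion h.1) fun a b => Subtype.ext (h.2 a a.2 b b.2)

theorem incl_injective (h : K ≤ L) : Function.Injective (incl h) :=
  Set.inclusion_injective h.1

theorem one_eq_of_le (h : K ≤ L) : K.one = L.one :=
  congrArg Subtype.val (map_one (incl h))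

theorem inv_eq_of_le (h : K ≤ L) {x : V} (hx : x ∈ K.carrier) : K.inv x = L.inv x :=
  congrArg Subtype.val (map_inv (incl h) (⟨x, hx⟩ : K))

def ConjIn (L : SubsetGroup V) (x y : V) : Prop :=
  ∃ (hx : x ∈ L.carrier) (hy : y ∈ L.carrier), IsConj (⟨x, hx⟩ : L) ⟨y, hy⟩

theorem ConjIn.mono {x y : V} (hc : K.ConjIn x y) (h : K ≤ L) : L.ConjIn x y :=
  let ⟨hx, hy, hc⟩ := hc
  ⟨h.1 hx, h.1 hy, (incl h).map_isConj hc⟩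

section iUnion

variable {ι : Type*} (f : ι → SubsetGroup V)

open Classical in
noncomputable def iUnionMul (x y : V) : V :=
  if h : ∃ i, x ∈ (f i).carrier ∧ y ∈ (f i).carrier then (f h.choose).mul x y else x

open Classical in
noncomputable def iUnionInv (x : V) : V :=
  if h : ∃ i, x ∈ (f i).carrier then (f h.choose).inv x else x

variable {f} (hf : Directed (· ≤ ·) f)
include hf

theorem exists_le_mem (j : ι) {z : V} (hz : z ∈ ⋃ i, (f i).carrier) :
    ∃ k, f j ≤ f k ∧ z ∈ (f k).carrier :=
  let ⟨i, hi⟩ := Set.mem_iUnion.1 hz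
  let ⟨k, hjk, hik⟩ := hf j i
  ⟨k, hjk, hik.1 hi⟩

theorem iUnionMul_eq {i : ι} {x y : V} (hx : x ∈ (f i).carrier) (hy : y ∈ (f i).carrier) :
    iUnionMul f x y = (f i).mul x y := by
  have h : ∃ i, x ∈ (f i).carrier ∧ y ∈ (f i).carrier := ⟨i, hx, hy⟩
  obtain ⟨k, hk, hik⟩ := hf h.choose i
  rw [iUnionMul, dif_pos h, hk.2 x h.choose_spec.1 y h.choose_spec.2, hik.2 x hx y hy]

theorem iUnionInv_eq {i : ι} {x : V} (hx : x ∈ (f i).carrier) : iUnionInv f x = (f i).inv x := by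
  have h : ∃ i, x ∈ (f i).carrier := ⟨i, hx⟩
  obtain ⟨k, hk, hik⟩ := hf h.choose i
  rw [iUnionInv, dif_pos h, inv_eq_of_le hk h.choose_spec, inv_eq_of_le hik hx]

theorem one_eq_of_directed (i j : ι) : (f i).one = (f j).one :=
  let ⟨_, hik, hjk⟩ := hf i j
  (one_eq_of_le hik).trans (one_eq_of_le hjk).symm

noncomputable def iUnion [Nonempty ι] : SubsetGroup V where
  carrier := ⋃ i, (f i).carrier
  one := (f (Classical.arbitrary ι)).one
  mul := iUnionMul f
  inv := iUnionInv f
  one_mem := Set.mem_iUnion.2 ⟨_, (f _).one_mem⟩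
  mul_mem {x y} hx hy := by
    obtain ⟨i, hi⟩ := Set.mem_iUnion.1 hx
    obtain ⟨k, hik, hy⟩ := exists_le_mem hf i hy
    rw [iUnionMul_eq hf (hik.1 hi) hy]
    exact Set.mem_iUnion.2 ⟨k, (f k).mul_mem (hik.1 hi) hy⟩
  inv_mem {x} hx := by
    obtain ⟨i, hi⟩ := Set.mem_iUnion.1 hx
    rw [iUnionInv_eq hf hi]
    exact Set.mem_iUnion.2 ⟨i, (f i).inv_mem hi⟩
  mul_assoc {x y z} hx hy hz := by
    obtain ⟨i, hi⟩ := Set.mem_iUnion.1 hx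
    obtain ⟨j, hij, hy⟩ := exists_le_mem hf i hy
    obtain ⟨k, hjk, hz⟩ := exists_le_mem hf j hz
    have hx := hjk.1 (hij.1 hi)
    replace hy := hjk.1 hy
    rw [iUnionMul_eq hf hx hy, iUnionMul_eq hf ((f k).mul_mem hx hy) hz, iUnionMul_eq hf hy hz,
      iUnionMul_eq hf hx ((f k).mul_mem hy hz), (f k).mul_assoc hx hy hz]
  one_mul {x} hx := by
    obtain ⟨i, hi⟩ := Set.mem_iUnion.1 hx
    rw [one_eq_of_directed hf _ i, iUnionMul_eq hf (f i).one_mem hi, (f i).one_mul hi]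
  inv_mul_cancel {x} hx := by
    obtain ⟨i, hi⟩ := Set.mem_iUnion.1 hx
    rw [iUnionInv_eq hf hi, iUnionMul_eq hf ((f i).inv_mem hi) hi, (f i).inv_mul_cancel hi,
      one_eq_of_directed hf i]

variable [Nonempty ι]

theorem le_iUnion (i : ι) : f i ≤ iUnion hf :=
  ⟨Set.subset_iUnion (fun i => (f i).carrier) i, fun _ hx _ hy => (iUnionMul_eq hf hx hy).symm⟩

theorem isTorsionFree_iUnion (htf : ∀ i, Monoid.IsTorsionFree (f i)) :
    Monoid.IsTorsionFree (iUnion hf) := by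
  intro x hx hfin
  obtain ⟨i, hi⟩ := Set.mem_iUnion.1 x.2
  have hx' : incl (le_iUnion hf i) ⟨x, hi⟩ = x := rfl
  refine htf i ⟨x, hi⟩ (fun h1 => hx ?_) ((incl_injective _).isOfFinOrder_iff.1 (hx' ▸ hfin))
  rw [← hx', h1, map_one]

end iUnion

theorem mk_iUnion_le {ι : Type u} [Nonempty ι] {f : ι → SubsetGroup V} (hf : Directed (· ≤ ·) f)
    {κ : Cardinal.{u}} (hκ : ℵ₀ ≤ κ) (hι : #ι ≤ κ) (hfκ : ∀ i, #(f i) ≤ κ) : #(iUnion hf) ≤ κ :=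
  (Cardinal.mk_iUnion_le _).trans ((mul_le_mul' hι (ciSup_le' hfκ)).trans (mul_eq_self hκ).le)

section ofInjective

variable {X : Type u} [Group X] {θ : X → V} (hθ : Function.Injective θ)

noncomputable def ofInjective : SubsetGroup V where
  carrier := Set.range θ
  one := θ 1
  mul x y := θ (Function.invFun θ x * Function.invFun θ y)
  inv x := θ (Function.invFun θ x)⁻¹
  one_mem := ⟨1, rfl⟩
  mul_mem _ _ := ⟨_, rfl⟩
  inv_mem _ := ⟨_, rfl⟩
  mul_assoc := by
    rintro _ _ _ ⟨a, rfl⟩ ⟨b, rfl⟩ ⟨c, rfl⟩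
    simp only [Function.leftInverse_invFun hθ _, _root_.mul_assoc]
  one_mul := by
    rintro _ ⟨a, rfl⟩
    simp only [Function.leftInverse_invFun hθ _, _root_.one_mul]
  inv_mul_cancel := by
    rintro _ ⟨a, rfl⟩
    simp only [Function.leftInverse_invFun hθ _, _root_.inv_mul_cancel]

noncomputable def equivOfInjective : X ≃* ofInjective hθ :=
  { Equiv.ofInjective θ hθ with
    map_mul' := fun x y => Subtype.ext <| by
      change θ (x * y) = θ (Function.invFun θ (θ x) * Function.invFun θ (θ y))
      simp only [Function.leftInverse_invFun hθ _] }

theorem isTorsionFree_ofInjective (hX : Monoid.IsTorsionFree X) :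
    Monoid.IsTorsionFree (ofInjective hθ) :=
  hX.of_injective (f := (equivOfInjective hθ).symm.toMonoidHom) (equivOfInjective hθ).symm.injective

theorem mk_ofInjective : #(ofInjective hθ) = #X := mk_range_eq θ hθ

theorem le_ofInjective {K : SubsetGroup V} {f : K →* X} (hf : ∀ k, θ (f k) = k) :
    K ≤ ofInjective hθ := by
  have hinv (k : K) : Function.invFun θ k = f k :=
    hθ ((Function.invFun_eq ⟨f k, hf k⟩).trans (hf k).symm)
  refine ⟨fun x hx => ⟨f ⟨x, hx⟩, hf _⟩, fun x hx y hy => ?_⟩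
  change K.mul x y = θ (Function.invFun θ x * Function.invFun θ y)
  rw [hinv ⟨x, hx⟩, hinv ⟨y, hy⟩, ← map_mul, hf]
  rfl

end ofInjective

def IsSmallTorsionFree (κ : Cardinal.{u}) (K : SubsetGroup V) : Prop :=
  Monoid.IsTorsionFree K ∧ #K ≤ κ

variable {κ : Cardinal.{u}}

theorem exists_isSmallTorsionFree_upperBound (hκ : ℵ₀ ≤ κ) {ι : Type u}
    {f : ι → SubsetGroup V} (hf : Directed (· ≤ ·) f) (hι : #ι ≤ κ)
    (hfκ : ∀ i, IsSmallTorsionFree κ (f i)) {K : SubsetGroup V} (hK : IsSmallTorsionFree κ K)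
    (hKf : ∀ i, K ≤ f i) : ∃ U, IsSmallTorsionFree κ U ∧ K ≤ U ∧ ∀ i, f i ≤ U := by
  cases isEmpty_or_nonempty ι
  · exact ⟨K, hK, le_rfl, isEmptyElim⟩
  · exact ⟨iUnion hf, ⟨isTorsionFree_iUnion hf fun i => (hfκ i).1,
      mk_iUnion_le hf hκ hι fun i => (hfκ i).2⟩,
      (hKf (Classical.arbitrary ι)).trans (le_iUnion hf _), le_iUnion hf⟩

theorem isConj_iUnion_of_conjIn_succ {f : ℕ → SubsetGroup V} (hf : Monotone f)
    (hconj : ∀ n (a b : f n), a ≠ 1 → b ≠ 1 → (f (n + 1)).ConjIn a b)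
    (x y : iUnion hf.directed_le) (hx : x ≠ 1) (hy : y ≠ 1) : IsConj x y := by
  obtain ⟨i, hxi⟩ := Set.mem_iUnion.1 x.2
  obtain ⟨j, hyj⟩ := Set.mem_iUnion.1 y.2
  have hle := le_iUnion hf.directed_le
  let a : f (max i j) := ⟨x, (hf (le_max_left i j)).1 hxi⟩
  let b : f (max i j) := ⟨y, (hf (le_max_right i j)).1 hyj⟩
  have hne {c : f (max i j)} {z : iUnion hf.directed_le} (hcz : incl (hle _) c = z) (hz : z ≠ 1) :
      c ≠ 1 :=
    fun h => hz (by rw [← hcz, h, map_one])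
  obtain ⟨_, _, hc⟩ := (hconj _ a b (hne rfl hx) (hne rfl hy)).mono (hle _)
  exact hc

variable [Infinite V]

/-- The HNN extension of `K` conjugating `a` to `b`, placed in `V` around `K`; there is room for it
because `V` is larger than `K`. -/
theorem exists_le_conjIn (hκ : ℵ₀ ≤ κ) (hκV : κ < #V) {K : SubsetGroup V}
    (hK : IsSmallTorsionFree κ K) {a b : K} (ha : a ≠ 1) (hb : b ≠ 1) :
    ∃ L, K ≤ L ∧ IsSmallTorsionFree κ L ∧ L.ConjIn a b := by
  obtain ⟨H, _, f, hf, hH, hconj, hHcard⟩ := hK.1.exists_isConj ha hb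
  have hHκ : #H ≤ κ := hHcard.trans (max_le hK.2 hκ)
  have hroom : #H ≤ #↥(Set.range (Subtype.val : K → V))ᶜ := by
    rw [Subtype.range_coe, mk_compl_of_infinite _ (hK.2.trans_lt hκV)]
    exact hHκ.trans hκV.le
  obtain ⟨θ, hθ, hθf⟩ := hf.exists_injective_comp_eq Subtype.val_injective hroom
  have hle := le_ofInjective hθ (congrFun hθf)
  refine ⟨ofInjective hθ, hle, ⟨isTorsionFree_ofInjective hθ hH,
    (mk_ofInjective hθ).trans_le hHκ⟩, hle.1 a.2, hle.1 b.2, ?_⟩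
  have he (k : K) : equivOfInjective hθ (f k) = ⟨k, hle.1 k.2⟩ := Subtype.ext (congrFun hθf k)
  simpa only [MulEquiv.coe_toMonoidHom, he] using
    (equivOfInjective hθ).toMonoidHom.map_isConj hconj

theorem exists_le_forall_conjIn (hκ : ℵ₀ ≤ κ) (hκV : κ < #V) {K : SubsetGroup V}
    (hK : IsSmallTorsionFree κ K) :
    ∃ L, K ≤ L ∧ IsSmallTorsionFree κ L ∧ ∀ a b : K, a ≠ 1 → b ≠ 1 → L.ConjIn a b := by
  obtain ⟨_, _⟩ := exists_wellFoundedLT (K × K)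
  have hKK : #(K × K) ≤ κ := by
    simpa [mul_eq_self hκ] using mul_le_mul' hK.2 hK.2
  obtain ⟨L, hKL, hL, hconj⟩ := exists_le_forall_of_wellFoundedLT (IsSmallTorsionFree κ)
    (fun (p : K × K) (L : SubsetGroup V) => p.1 ≠ 1 → p.2 ≠ 1 → L.ConjIn p.1 p.2) K
    (fun g hg hJ hgκ hKg => exists_isSmallTorsionFree_upperBound hκ hg (hJ.trans hKK) hgκ hK hKg)
    (fun p M hKM hM => by
      by_cases hp : p.1 ≠ 1 ∧ p.2 ≠ 1
      · have hne {a : K} : a ≠ 1 → incl hKM a ≠ 1 := (map_ne_one_iff _ (incl_injective hKM)).2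
        obtain ⟨N, hMN, hN, hc⟩ := exists_le_conjIn hκ hκV hM (hne hp.1) (hne hp.2)
        exact ⟨N, hMN, hN, fun _ _ => hc⟩
      · exact ⟨M, le_rfl, hM, fun h1 h2 => absurd ⟨h1, h2⟩ hp⟩)
    (fun _ _ _ h hc h1 h2 => (hc h1 h2).mono h)
  exact ⟨L, hKL, hL, fun a b => hconj (a, b)⟩

theorem exists_le_isTorsionFree_forall_isConj (hκ : ℵ₀ ≤ κ) (hκV : κ < #V) {K : SubsetGroup V}
    (hK : IsSmallTorsionFree κ K) :
    ∃ H, K ≤ H ∧ Monoid.IsTorsionFree H ∧ ∀ x y : H, x ≠ 1 → y ≠ 1 → IsConj x y := by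
  choose! next hnext using fun K (hK : IsSmallTorsionFree κ K) => exists_le_forall_conjIn hκ hκV hK
  set f : ℕ → SubsetGroup V := fun n => next^[n] K
  have hsucc (n : ℕ) : f (n + 1) = next (f n) := Function.iterate_succ_apply' _ _ _
  have hf (n : ℕ) : IsSmallTorsionFree κ (f n) := by
    induction n with
    | zero => exact hK
    | succ n ih => exact hsucc n ▸ (hnext _ ih).2.1
  have hmono : Monotone f := monotone_nat_of_le_succ fun n => hsucc n ▸ (hnext _ (hf n)).1
  refine ⟨iUnion hmono.directed_le, le_iUnion hmono.directed_le 0,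
    isTorsionFree_iUnion _ fun n => (hf n).1, isConj_iUnion_of_conjIn_succ hmono fun n => ?_⟩
  exact hsucc n ▸ (hnext _ (hf n)).2.2

end SubsetGroup

/-- For an infinite set `B`, the free group on `B` embeds into a torsion-free
simple group. -/
theorem stmt6 (B : Type u) [Infinite B] :
    ∃ (H : Type u) (_ : Group H),
      Monoid.IsTorsionFree H ∧ IsSimpleGroup H ∧
      ∃ ι : FreeGroup B →* H, Function.Injective ι := by
  open SubsetGroup in
  have hθ : Function.Injective (fun g : FreeGroup B => ({g} : Set (FreeGroup B))) :=
    Set.singleton_injective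
  obtain ⟨H, hle, hH, hconj⟩ := exists_le_isTorsionFree_forall_isConj (aleph0_le_mk _)
    (mk_set ▸ cantor _) (K := ofInjective hθ)
    ⟨isTorsionFree_ofInjective hθ fun _ => not_isOfFinOrder_of_isMulTorsionFree,
      (mk_ofInjective hθ).le⟩
  have hι := (incl_injective hle).comp (equivOfInjective hθ).injective
  have : Nontrivial H := hι.nontrivial
  exact ⟨H, inferInstance, hH, .of_forall_isConj hconj,
    (incl hle).comp (equivOfInjective hθ).toMonoidHom, hι⟩
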